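/- arXiv:2411.00307 — 2 statements merged into one kernel-verified Lean document; each statement's English description precedes it below -/
import Mathlib

section
/- Let n ≥ 1, let R be a finite commutative ℤ/n-algebra, and let S ⊆ R \ {0} be a subset with S = -S that is stable under the action of (ℤ/n)ˣ (i.e., u•s ∈ S for every u ∈ (ℤ/n)ˣ and s ∈ S). Then the Cayley graph Γ(R,S) is integral: every eigenvalue of its adjacency matrix is an integer. -/
/-- Adjacency matrix (over ℂ) of the Cayley graph Γ(R,S):
`a` and `b` are adjacent iff `b - a ∈ S`. -/
noncomputable def cayleyAdj {R : Type*} [Ring R] (S : Set R) : Matrix R R ℂ :=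
  fun a b => S.indicator (fun _ => (1 : ℂ)) (b - a)

/-- The Cayley graph Γ(R,S) is integral: every eigenvalue of its adjacency matrix
is a (rational) integer. -/
def IsIntegralCayley {R : Type*} [Ring R] [Fintype R] (S : Set R) : Prop :=
  letI := Classical.decEq R
  spectrum ℂ (cayleyAdj S) ⊆ Set.range ((↑) : ℤ → ℂ)

/-!
The additive characters `ψ` of `R` form an eigenbasis of the adjacency matrix, with eigenvalues
`∑ s ∈ S, ψ s`. Each `ψ s` is an `n`-th root of unity, so such an eigenvalue is the image of an
algebraic integer `Λ = ∑ s ∈ S, ζ ^ e s` of the cyclotomic field `ℚ(ζ)`, `ζ` a primitive `n`-th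
root of unity. The automorphism `ζ ↦ ζ ^ u` maps `Λ` to the element corresponding to
`∑ s ∈ S, ψ (u • s)`, which is the same sum because `u • S = S`. So `Λ` is Galois invariant,
hence rational, hence an integer.
-/

open Finset Matrix

theorem LinearMap.spectrum_eq_range_of_apply_basis {K V ι : Type*} [Field K] [AddCommGroup V]
    [Module K V] [Fintype ι] [DecidableEq ι] (f : V →ₗ[K] V) (b : Module.Basis ι K V) (c : ι → K)
    (hf : ∀ i, f (b i) = c i • b i) : spectrum K f = Set.range c := by
  have hdiag : f.toMatrix b b = diagonal c := by
    ext i j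
    rw [LinearMap.toMatrix_apply, hf, map_smul, b.repr_self, Finsupp.smul_apply,
      Finsupp.single_apply, diagonal_apply]
    split_ifs <;> simp_all [eq_comm]
  rw [← LinearMap.spectrum_toMatrix f b, hdiag, spectrum_diagonal]

theorem cayleyAdj_mulVec_addChar {R : Type*} [Ring R] [Fintype R] (S : Set R)
    [DecidablePred (· ∈ S)] (ψ : AddChar R ℂ) :
    cayleyAdj S *ᵥ ⇑ψ = (∑ s ∈ S.toFinset, ψ s) • ⇑ψ := by
  ext a
  simp only [mulVec, dotProduct, cayleyAdj, Set.indicator_apply, ite_mul, one_mul, zero_mul,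
    Pi.smul_apply, smul_eq_mul, sum_mul]
  rw [← Fintype.sum_equiv (Equiv.addRight a) (fun s => if s ∈ S then ψ s * ψ a else 0) _
    (fun s => by simp [AddChar.map_add_eq_mul]), ← sum_filter]
  congr 1
  ext
  simp

theorem spectrum_cayleyAdj {R : Type*} [Ring R] [Fintype R] [DecidableEq R] (S : Set R)
    [DecidablePred (· ∈ S)] :
    spectrum ℂ (cayleyAdj S) = Set.range fun ψ : AddChar R ℂ => ∑ s ∈ S.toFinset, ψ s := by
  classical
  rw [← spectrum_toLin']
  refine LinearMap.spectrum_eq_range_of_apply_basis _ (AddChar.complexBasis R) _ fun ψ => ?_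
  simpa using cayleyAdj_mulVec_addChar S ψ

theorem AddChar.map_zmod_smul_eq_pow {n : ℕ} [NeZero n] {G : Type*} [AddCommGroup G]
    [Module (ZMod n) G] (ψ : AddChar G ℂ) (k : ZMod n) (x : G) : ψ (k • x) = ψ x ^ k.val := by
  rw [← AddChar.map_nsmul_eq_pow, ← Nat.cast_smul_eq_nsmul (ZMod n), ZMod.natCast_zmod_val]

theorem AddChar.pow_eq_one_of_zmodModule {n : ℕ} {G : Type*} [AddCommGroup G]
    [Module (ZMod n) G] (ψ : AddChar G ℂ) (x : G) : ψ x ^ n = 1 := by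
  rw [← AddChar.map_nsmul_eq_pow, ← Nat.cast_smul_eq_nsmul (ZMod n), ZMod.natCast_self,
    zero_smul, AddChar.map_zero_eq_one]

theorem Finset.sum_comp_units_smul {n : ℕ} {G M : Type*} [AddCommGroup G] [Module (ZMod n) G]
    [AddCommMonoid M] (S : Finset G) (hS : ∀ u : (ZMod n)ˣ, ∀ s ∈ S, (u : ZMod n) • s ∈ S)
    (u : (ZMod n)ˣ) (f : G → M) : ∑ s ∈ S, f ((u : ZMod n) • s) = ∑ s ∈ S, f s :=
  sum_nbij' (u • ·) (u⁻¹ • ·) (hS u) (hS u⁻¹) (fun s _ => inv_smul_smul u s)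
    (fun s _ => smul_inv_smul u s) fun _ _ => rfl

theorem exists_int_eq_of_isIntegral_of_forall_aut_fixed {K : Type*} [Field K] [NumberField K]
    [IsGalois ℚ K] {x : K} (hint : IsIntegral ℤ x) (hfix : ∀ σ : Gal(K/ℚ), σ x = x) :
    ∃ m : ℤ, x = m := by
  obtain ⟨q, rfl⟩ := (IsGalois.mem_range_algebraMap_iff_fixed x).mpr hfix
  obtain ⟨m, rfl⟩ := IsIntegrallyClosed.isIntegral_iff.mp
    ((isIntegral_algebraMap_iff (algebraMap ℚ K).injective).mp hint)
  exact ⟨m, by simp⟩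

theorem AddChar.exists_int_eq_sum_of_units_smul_mem {n : ℕ} [NeZero n] {G : Type*}
    [AddCommGroup G] [Module (ZMod n) G] (ψ : AddChar G ℂ) (S : Finset G)
    (hS : ∀ u : (ZMod n)ˣ, ∀ s ∈ S, (u : ZMod n) • s ∈ S) : ∃ m : ℤ, ∑ s ∈ S, ψ s = m := by
  -- The type ascription makes the instance use the `Algebra ℚ` structure found by synthesis.
  have : IsCyclotomicExtension {n} ℚ (CyclotomicField n ℚ) :=
    CyclotomicField.isCyclotomicExtension n ℚ
  have := IsCyclotomicExtension.isGalois {n} ℚ (CyclotomicField n ℚ)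
  let φ : CyclotomicField n ℚ →ₐ[ℚ] ℂ := IsAlgClosed.lift
  set ζ := IsCyclotomicExtension.zeta n ℚ (CyclotomicField n ℚ)
  have hζ : IsPrimitiveRoot ζ n := IsCyclotomicExtension.zeta_spec n ℚ _
  choose e he using fun s =>
    (hζ.map_of_injective φ.injective).eq_pow_of_pow_eq_one (ψ.pow_eq_one_of_zmodModule s)
  have hφ (k : ℕ) (s : G) : φ ((ζ ^ k) ^ e s) = ψ s ^ k := by
    rw [map_pow, map_pow, ← pow_mul, mul_comm, pow_mul, ← (he s).2]
    rfl
  set Λ := ∑ s ∈ S, ζ ^ e s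
  have hφΛ : φ Λ = ∑ s ∈ S, ψ s := by
    simpa only [Λ, map_sum, pow_one] using sum_congr rfl fun s _ => hφ 1 s
  have hint : IsIntegral ℤ Λ :=
    IsIntegral.sum _ fun s _ => (hζ.isIntegral (NeZero.pos n)).pow _
  have hfix (σ : Gal(CyclotomicField n ℚ/ℚ)) : σ Λ = Λ := by
    apply φ.injective
    let u := hζ.autToPow ℚ σ
    calc φ (σ Λ) = ∑ s ∈ S, ψ s ^ (u : ZMod n).val := by
          simp only [Λ, map_sum, map_pow, ← hζ.autToPow_spec ℚ σ, hφ, u]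
      _ = ∑ s ∈ S, ψ ((u : ZMod n) • s) := by simp only [ψ.map_zmod_smul_eq_pow]
      _ = φ Λ := by rw [sum_comp_units_smul S hS u, hφΛ]
  obtain ⟨m, hm⟩ := exists_int_eq_of_isIntegral_of_forall_aut_fixed hint hfix
  exact ⟨m, by rw [← hφΛ, hm, map_intCast]⟩

theorem integral_of_stable_general (n : ℕ) (hn : 1 ≤ n) (R : Type*) [CommRing R] [Fintype R]
    [Algebra (ZMod n) R] (S : Set R)
    (hstab : ∀ (u : (ZMod n)ˣ), ∀ s ∈ S, ((u : ZMod n) • s) ∈ S) :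
    IsIntegralCayley S := by
  have : NeZero n := ⟨by omega⟩
  classical
  intro μ hμ
  rw [spectrum_cayleyAdj] at hμ
  obtain ⟨ψ, rfl⟩ := hμ
  obtain ⟨m, hm⟩ := ψ.exists_int_eq_sum_of_units_smul_mem S.toFinset (by simpa using hstab)
  exact ⟨m, hm.symm⟩

/-- If `S ⊆ R \ {0}` with `S = -S` is stable under the action of `(ZMod n)ˣ`,
then the Cayley graph `Γ(R,S)` is integral. -/
theorem integral_of_stable (n : ℕ) (hn : 1 ≤ n) (R : Type*) [CommRing R] [Fintype R]
    [Algebra (ZMod n) R] (S : Set R) (hS0 : S ⊆ {x : R | x ≠ 0}) (hSneg : S = -S)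
    (hstab : ∀ (u : (ZMod n)ˣ), ∀ s ∈ S, ((u : ZMod n) • s) ∈ S) :
    IsIntegralCayley S :=
  integral_of_stable_general n hn R S hstab
end

section
/- Let p be a prime, let K be a finite extension of ℚ_p with ring of integers 𝒪_K (the integral closure of ℤ_p in K), and let I ⊆ 𝒪_K be a nonzero ideal. Let a ≥ 0 be the integer such that I ∩ ℤ_p = p^a ℤ_p. Then 𝒪_K/I is a finite symmetric ℤ/p^a-algebra. -/
/-!
`𝒪_K ⧸ I` is finite because `ℤ_p` has finite quotients and `𝒪_K` is a finite `ℤ_p`-algebra.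
By the Chinese remainder theorem `𝒪_K ⧸ I ≅ ∏ 𝒪_K ⧸ P ^ e`. Each factor has a unique minimal
ideal, generated by the image of any `t ∈ P ^ (e - 1) \ P ^ e`, so any additive map to `ℤ/p^a`
not vanishing at `t` is non-degenerate; such maps exist since homomorphisms into `ℤ/n` separate
the points of a finite abelian group killed by `n`. The sum of these maps is non-degenerate on
the product.
-/

instance ZMod.hasEnoughRootsOfUnity_multiplicative (n : ℕ) [NeZero n] :
    HasEnoughRootsOfUnity (Multiplicative (ZMod n)) n where
  prim := ⟨.ofAdd 1, by
    rw [IsPrimitiveRoot.iff_orderOf, orderOf_ofAdd_eq_addOrderOf, ZMod.addOrderOf_one]⟩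
  cyc :=
    have : IsCyclic (Multiplicative (ZMod n))ˣ := isCyclic_of_surjective _ toUnits.surjective
    inferInstance

theorem AddCommGroup.exists_addMonoidHom_zmod_apply_ne_zero {M : Type*} [AddCommGroup M]
    [Finite M] (n : ℕ) [NeZero n] (hM : ∀ x : M, n • x = 0) {s : M} (hs : s ≠ 0) :
    ∃ ψ : M →+ ZMod n, ψ s ≠ 0 := by
  have : HasEnoughRootsOfUnity (Multiplicative (ZMod n)) (Monoid.exponent (Multiplicative M)) :=
    .of_dvd _ (Monoid.exponent_dvd_of_forall_pow_eq_one hM)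
  obtain ⟨φ, hφ⟩ := CommGroup.exists_apply_ne_one_of_hasEnoughRootsOfUnity (Multiplicative M)
    (Multiplicative (ZMod n)) (a := .ofAdd s) hs
  exact ⟨MonoidHom.toAdditive (toUnits.symm.toMonoidHom.comp φ),
    fun h => hφ (toUnits.symm.injective h)⟩

instance PadicInt.hasFiniteQuotients (p : ℕ) [Fact p.Prime] : Ring.HasFiniteQuotients ℤ_[p] where
  finiteQuotient {I} hI := by
    obtain ⟨n, rfl⟩ := PadicInt.ideal_eq_span_pow_p hI
    rw [← PadicInt.ker_toZModPow]
    exact Finite.of_injective _ (RingHom.kerLift_injective _)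

namespace AddMonoidHom

variable {A B M : Type*} [CommRing A] [CommRing B] [AddCommMonoid M]

def IsNondegenerate (ψ : A →+ M) : Prop :=
  ∀ J : Ideal A, (∀ x ∈ J, ψ x = 0) → J = ⊥

theorem isNondegenerate_of_forall_mem {ψ : A →+ M} {s : A} (hs : ∀ J : Ideal A, J ≠ ⊥ → s ∈ J)
    (hψ : ψ s ≠ 0) : ψ.IsNondegenerate :=
  fun J hJ => by_contra fun hJ' => hψ (hJ s (hs J hJ'))

theorem IsNondegenerate.comp_ringEquiv {ψ : B →+ M} (hψ : ψ.IsNondegenerate) (e : A ≃+* B) :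
    (ψ.comp e.toAddMonoidHom).IsNondegenerate := by
  intro J hJ
  have hcomap : J.comap e.symm = ⊥ := hψ _ fun x hx => by simpa using hJ _ hx
  rw [eq_bot_iff] at hcomap ⊢
  intro y hy
  simpa using hcomap (show e y ∈ J.comap e.symm by simpa using hy)

theorem IsNondegenerate.pi {ι : Type*} [Fintype ι] {R : ι → Type*} [∀ i, CommRing (R i)]
    {ψ : ∀ i, R i →+ M} (hψ : ∀ i, (ψ i).IsNondegenerate) :
    (∑ i, (ψ i).comp (Pi.evalAddMonoidHom R i)).IsNondegenerate := by
  classical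
  intro J hJ
  rw [eq_bot_iff]
  intro x hx
  ext i
  -- `Pi.single i c * x ∈ J` is seen by `∑ ψ` only through its `i`-th coordinate `c * x i`.
  have hspan : Ideal.span {x i} = ⊥ := hψ i _ fun y hy => by
    obtain ⟨c, rfl⟩ := Ideal.mem_span_singleton'.mp hy
    have := hJ _ (J.mul_mem_left (Pi.single i c) hx)
    rw [← Pi.single_mul_left, AddMonoidHom.finsetSum_apply, Finset.sum_eq_single i
      (fun j _ hj => by simp [Pi.single_eq_of_ne hj]) (by simp)] at this
    simpa using this
  simpa using hspan

end AddMonoidHom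

open UniqueFactorizationMonoid

theorem Ideal.exists_ne_zero_forall_mem_quotient_pow {R : Type*} [CommRing R] [IsDedekindDomain R]
    {P : Ideal R} (hP : Prime P) {e : ℕ} (he : e ≠ 0) :
    ∃ s : R ⧸ P ^ e, s ≠ 0 ∧ ∀ J : Ideal (R ⧸ P ^ e), J ≠ ⊥ → s ∈ J := by
  have hlt : P ^ e < P ^ (e - 1) := Ideal.pow_right_strictAnti P hP.ne_zero
    (Ideal.isPrime_of_prime hP).ne_top (by omega)
  obtain ⟨t, ht, hte⟩ := SetLike.exists_of_lt hlt
  refine ⟨Ideal.Quotient.mk _ t, by rwa [Ne, Ideal.Quotient.eq_zero_iff_mem], fun J hJ => ?_⟩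
  -- the ideals of `R ⧸ P ^ e` are the images of the `P ^ j` with `j ≤ e`
  have hle : P ^ e ≤ J.comap (Ideal.Quotient.mk _) := fun x hx => by
    simp [Ideal.Quotient.eq_zero_iff_mem.mpr hx]
  obtain ⟨j, hj, hJj⟩ := (dvd_prime_pow hP e).mp (Ideal.dvd_iff_le.mpr hle)
  rw [associated_iff_eq] at hJj
  have hje : j ≠ e := by
    rintro rfl
    rw [← Ideal.map_comap_of_surjective _ Ideal.Quotient.mk_surjective J, hJj,
      Ideal.map_quotient_self] at hJ
    exact hJ rfl
  show t ∈ J.comap (Ideal.Quotient.mk _)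
  exact hJj ▸ Ideal.pow_le_pow_right (by omega) ht

theorem IsDedekindDomain.exists_isNondegenerate_quotient {R : Type*} [CommRing R]
    [IsDedekindDomain R] {I : Ideal R} (hI : I ≠ ⊥) [Finite (R ⧸ I)] (n : ℕ) [NeZero n]
    (hn : (n : R ⧸ I) = 0) : ∃ ψ : R ⧸ I →+ ZMod n, ψ.IsNondegenerate := by
  let E := IsDedekindDomain.quotientEquivPiFactors hI
  have hfactor : ∀ P : (factors I).toFinset,
      ∃ ψ : R ⧸ (P : Ideal R) ^ (factors I).count (P : Ideal R) →+ ZMod n, ψ.IsNondegenerate := by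
    rintro ⟨P, hP⟩
    rw [Multiset.mem_toFinset] at hP
    obtain ⟨s, hs0, hs⟩ := Ideal.exists_ne_zero_forall_mem_quotient_pow (prime_of_factor _ hP)
      (Multiset.count_ne_zero.mpr hP)
    let f := (Pi.evalRingHom _ ⟨P, Multiset.mem_toFinset.mpr hP⟩).comp E.toRingHom
    have : Finite (R ⧸ P ^ (factors I).count P) :=
      Finite.of_surjective f ((Function.surjective_eval _).comp E.surjective)
    have hkill (x : R ⧸ P ^ (factors I).count P) : n • x = 0 := by
      rw [nsmul_eq_mul, ← map_natCast f, hn, map_zero, zero_mul]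
    obtain ⟨ψ, hψ⟩ := AddCommGroup.exists_addMonoidHom_zmod_apply_ne_zero n hkill hs0
    exact ⟨ψ, AddMonoidHom.isNondegenerate_of_forall_mem hs hψ⟩
  choose ψ hψ using hfactor
  exact ⟨_, (AddMonoidHom.IsNondegenerate.pi hψ).comp_ringEquiv E⟩

/-- Let `K` be a finite extension of `ℚ_p` with ring of integers `𝒪_K` (the integral
closure of `ℤ_p` in `K`), and let `I ⊆ 𝒪_K` be a nonzero ideal with `I ∩ ℤ_p = p^a ℤ_p`.
Then `𝒪_K/I` is a finite symmetric `ZMod (p^a)`-algebra. -/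
theorem padic_quotient_symmetric (p : ℕ) [Fact p.Prime] (K : Type*) [Field K]
    [Algebra ℚ_[p] K] [FiniteDimensional ℚ_[p] K]
    [Algebra ℤ_[p] K] [IsScalarTower ℤ_[p] ℚ_[p] K]
    (I : Ideal (integralClosure ℤ_[p] K)) (hI : I ≠ ⊥) (a : ℕ)
    (ha : Ideal.comap (algebraMap ℤ_[p] (integralClosure ℤ_[p] K)) I
        = Ideal.span {(p : ℤ_[p]) ^ a}) :
    Finite ((integralClosure ℤ_[p] K) ⧸ I) ∧
    ∃ ψ : ((integralClosure ℤ_[p] K) ⧸ I) →+ ZMod (p ^ a),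
      ∀ J : Ideal ((integralClosure ℤ_[p] K) ⧸ I), (∀ x ∈ J, ψ x = 0) → J = ⊥ := by
  have : IsDedekindDomain (integralClosure ℤ_[p] K) :=
    integralClosure.isDedekindDomain ℤ_[p] ℚ_[p] K
  have : Module.Finite ℤ_[p] (integralClosure ℤ_[p] K) :=
    IsIntegralClosure.finite ℤ_[p] ℚ_[p] K (integralClosure ℤ_[p] K)
  have := Ring.HasFiniteQuotients.of_module_finite ℤ_[p] (integralClosure ℤ_[p] K)
  have : Finite ((integralClosure ℤ_[p] K) ⧸ I) := Ring.HasFiniteQuotients.finiteQuotient hI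
  have : NeZero (p ^ a) := ⟨pow_ne_zero a (Fact.out : p.Prime).ne_zero⟩
  have hpa : ((p ^ a : ℕ) : (integralClosure ℤ_[p] K) ⧸ I) = 0 := by
    rw [← map_natCast (Ideal.Quotient.mk I), Ideal.Quotient.eq_zero_iff_mem,
      ← map_natCast (algebraMap ℤ_[p] _), ← Ideal.mem_comap, ha, Nat.cast_pow]
    exact Ideal.mem_span_singleton_self _
  exact ⟨inferInstance, IsDedekindDomain.exists_isNondegenerate_quotient hI (p ^ a) hpa⟩
end
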